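/- arXiv:1907.10398 — 3 statements merged into one kernel-verified Lean document; each statement's English description precedes it below -/
import Mathlib

section
/- Let G be a median graph with n vertices and m edges whose largest induced hypercube subgraph has dimension d. Then m ≤ d·n. -/
def interval {V : Type*} (G : SimpleGraph V) (u v : V) : Set V :=
  {x | G.dist u x + G.dist x v = G.dist u v}

def IsMedianGraph {V : Type*} (G : SimpleGraph V) : Prop :=
  G.Connected ∧ ∀ x y z : V,
    ∃! m : V, m ∈ interval G x y ∧ m ∈ interval G y z ∧ m ∈ interval G z x

def cubeGraph (k : ℕ) : SimpleGraph (Fin k → Bool) :=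
  SimpleGraph.fromRel (fun x y => ∃ i, x i ≠ y i ∧ ∀ j, j ≠ i → x j = y j)

/-!
Fix a base vertex `u`. Median graphs are bipartite, so every edge has exactly one endpoint closer
to `u`, and the number of edges is at most the sum over all `v` of the number of down-neighbours
of `v` (its neighbours closer to `u`). It remains to see that the set `W` of down-neighbours of `v`
spans an induced cube of dimension `#W`. Its vertices `x S`, `S ⊆ W`, are built one element at a
time by `x (insert w S) = median u (x S) w`, and the quadrangle condition keeps `x S` and
`x (insert e S)` adjacent. Conversely, an edge of `G` crosses the half-space `{a | d a w < d a v}`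
of at most one edge `vw` at `v`, so a path from `x S` to `x T` has at least `#(S ∆ T)` edges;
hence `S ↦ x S` is an induced embedding of the cube.
-/

open SimpleGraph Finset
open scoped symmDiff

theorem Finset.forall_subset_insert_iff {α : Type*} [DecidableEq α] {P : Finset α → Prop}
    {a : α} {W : Finset α} :
    (∀ S ⊆ insert a W, P S) ↔ ∀ S ⊆ W, P S ∧ P (insert a S) := by
  refine ⟨fun h S hS => ⟨h S (hS.trans (subset_insert a W)), h _ (insert_subset_insert a hS)⟩,
    fun h S hS => ?_⟩
  by_cases haS : a ∈ S
  · simpa [insert_erase haS] using (h _ (subset_insert_iff.mp hS)).2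
  · exact (h S ((subset_insert_iff_of_notMem haS).mp hS)).1

theorem cubeGraph_adj_iff {k : ℕ} (g h : Fin k → Bool) :
    (cubeGraph k).Adj g h ↔ #{i | g i ≠ h i} = 1 := by
  simp only [cubeGraph, fromRel_adj, card_eq_one, eq_singleton_iff_unique_mem, mem_filter,
    mem_univ, true_and]
  constructor
  · rintro ⟨-, ⟨i, hi, hj⟩ | ⟨i, hi, hj⟩⟩
    · exact ⟨i, hi, fun j hne => by_contra fun hji => hne (hj j hji)⟩
    · exact ⟨i, hi.symm, fun j hne => by_contra fun hji => hne (hj j hji).symm⟩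
  · rintro ⟨i, hi, hj⟩
    exact ⟨fun h => hi (congrFun h i),
      .inl ⟨i, hi, fun j hji => by_contra fun hne => hji (hj j hne)⟩⟩

section

variable {V : Type*} {G : SimpleGraph V}

theorem mem_interval {u v x : V} : x ∈ interval G u v ↔ G.dist u x + G.dist x v = G.dist u v :=
  Iff.rfl

namespace IsMedianGraph

noncomputable def median (hG : IsMedianGraph G) (a b c : V) : V :=
  (hG.2 a b c).exists.choose

theorem median_mem (hG : IsMedianGraph G) (a b c : V) :
    hG.median a b c ∈ interval G a b ∧ hG.median a b c ∈ interval G b c ∧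
      hG.median a b c ∈ interval G c a :=
  (hG.2 a b c).exists.choose_spec

theorem eq_median (hG : IsMedianGraph G) {a b c m : V} (hab : m ∈ interval G a b)
    (hbc : m ∈ interval G b c) (hca : m ∈ interval G c a) : m = hG.median a b c :=
  (hG.2 a b c).unique ⟨hab, hbc, hca⟩ (hG.median_mem a b c)

theorem dist_eq_succ_or_of_adj (hG : IsMedianGraph G) {a b : V} (hab : G.Adj a b) (z : V) :
    G.dist z b = G.dist z a + 1 ∨ G.dist z a = G.dist z b + 1 := by
  obtain ⟨hza, hab', hbz⟩ := hG.median_mem z a b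
  set m := hG.median z a b
  rw [mem_interval, dist_eq_one_iff_adj.mpr hab] at hab'
  rw [mem_interval] at hza hbz
  have h1 : G.dist b a = 1 := dist_eq_one_iff_adj.mpr hab.symm
  rcases Nat.eq_zero_or_pos (G.dist a m) with h | h
  · rw [← hG.1.dist_eq_zero_iff.mp h] at hbz
    simp only [G.dist_comm] at *
    omega
  · have h0 : G.dist m b = 0 := by omega
    rw [hG.1.dist_eq_zero_iff.mp h0] at hza
    omega

theorem dist_eq_two_of_adj_of_adj (hG : IsMedianGraph G) {v w₁ w₂ : V} (h₁ : G.Adj v w₁)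
    (h₂ : G.Adj v w₂) (hne : w₁ ≠ w₂) : G.dist w₁ w₂ = 2 := by
  have e₁ : G.dist w₁ v = 1 := dist_eq_one_iff_adj.mpr h₁.symm
  have e₂ : G.dist v w₂ = 1 := dist_eq_one_iff_adj.mpr h₂
  have hle : G.dist w₁ w₂ ≤ G.dist w₁ v + G.dist v w₂ := hG.1.dist_triangle
  have hpos : G.dist w₁ w₂ ≠ 0 := fun h => hne (hG.1.dist_eq_zero_iff.mp h)
  have hnadj : ¬ G.Adj w₁ w₂ := fun h => by
    have := hG.dist_eq_succ_or_of_adj h v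
    simp only [G.dist_comm] at *
    omega
  rw [← dist_eq_one_iff_adj] at hnadj
  omega

theorem quadrangle (hG : IsMedianGraph G) {z a b c : V} (hb : G.Adj a b) (hc : G.Adj a c)
    (hbc : b ≠ c) (hzb : G.dist z b < G.dist z a) (hzc : G.dist z c < G.dist z a) :
    G.Adj b (hG.median z b c) ∧ G.Adj c (hG.median z b c) ∧
      G.dist z (hG.median z b c) + 2 = G.dist z a := by
  obtain ⟨hzb', hbc', hcz'⟩ := hG.median_mem z b c
  rw [mem_interval] at hzb' hbc' hcz'
  rw [hG.dist_eq_two_of_adj_of_adj hb hc hbc] at hbc'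
  have := hG.dist_eq_succ_or_of_adj hb z
  have := hG.dist_eq_succ_or_of_adj hc z
  simp only [← dist_eq_one_iff_adj]
  simp only [G.dist_comm] at *
  omega

theorem dist_lt_of_adj_of_lt_of_not_lt (hG : IsMedianGraph G) {a b v w : V} (hab : G.Adj a b)
    (ha : G.dist a w < G.dist a v) (hb : ¬ G.dist b w < G.dist b v) :
    G.dist b v < G.dist a v := by
  have htri : G.dist b w ≤ G.dist b a + G.dist a w := hG.1.dist_triangle
  rw [dist_eq_one_iff_adj.mpr hab.symm] at htri
  have := hG.dist_eq_succ_or_of_adj hab v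
  simp only [G.dist_comm] at *
  omega

/-- An edge `ab` separates `v` from at most one of its neighbours on `a`'s side. -/
theorem eq_of_adj_of_lt_of_not_lt (hG : IsMedianGraph G) {a b v w₁ w₂ : V} (hab : G.Adj a b)
    (h₁ : G.Adj v w₁) (h₂ : G.Adj v w₂) (ha₁ : G.dist a w₁ < G.dist a v)
    (ha₂ : G.dist a w₂ < G.dist a v) (hb₁ : ¬ G.dist b w₁ < G.dist b v)
    (hb₂ : ¬ G.dist b w₂ < G.dist b v) : w₁ = w₂ := by
  by_contra hne
  obtain ⟨ht₁, ht₂, hat⟩ := hG.quadrangle h₁ h₂ hne ha₁ ha₂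
  set t := hG.median a w₁ w₂
  have hav : G.dist a v = G.dist b v + 1 := by
    have := hG.dist_lt_of_adj_of_lt_of_not_lt hab ha₁ hb₁
    have := hG.dist_eq_succ_or_of_adj hab.symm v
    simp only [G.dist_comm (u := v)] at this
    omega
  have hbw₁ : G.dist b w₁ = G.dist b v + 1 :=
    (hG.dist_eq_succ_or_of_adj h₁ b).resolve_right (by omega)
  have hbw₂ : G.dist b w₂ = G.dist b v + 1 :=
    (hG.dist_eq_succ_or_of_adj h₂ b).resolve_right (by omega)
  -- `v` and `t` are both the median of `b, w₁, w₂`, yet `t` is two steps closer to `a`.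
  have hmed : ∀ x, G.Adj w₁ x → G.Adj w₂ x → G.dist b x + 1 = G.dist b w₁ →
      G.dist b x + 1 = G.dist b w₂ → x = hG.median b w₁ w₂ := by
    intro x hx₁ hx₂ hbx₁ hbx₂
    have := hG.dist_eq_two_of_adj_of_adj h₁ h₂ hne
    rw [← dist_eq_one_iff_adj] at hx₁ hx₂
    apply hG.eq_median <;> rw [mem_interval] <;> simp only [G.dist_comm] at * <;> omega
  have hbt : G.dist b t ≤ G.dist b a + G.dist a t := hG.1.dist_triangle
  have hbt₁ : G.dist b w₁ ≤ G.dist b t + G.dist t w₁ := hG.1.dist_triangle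
  have hbt₂ : G.dist b w₂ ≤ G.dist b t + G.dist t w₂ := hG.1.dist_triangle
  rw [dist_eq_one_iff_adj.mpr hab.symm] at hbt
  rw [dist_eq_one_iff_adj.mpr ht₁.symm] at hbt₁
  rw [dist_eq_one_iff_adj.mpr ht₂.symm] at hbt₂
  have hvt : v = t := (hmed v h₁.symm h₂.symm (by omega) (by omega)).trans
    (hmed t ht₁ ht₂ (by omega) (by omega)).symm
  rw [← hvt] at hat
  omega

theorem median_down_step (hG : IsMedianGraph G) {u v w a : V} (hw : G.Adj v w)
    (hu : G.dist u w < G.dist u v) (ha : a ∈ interval G u v)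
    (haw : G.dist a w = G.dist a v + 1) :
    G.Adj a (hG.median u a w) ∧ hG.median u a w ∈ interval G u v ∧
      G.dist (hG.median u a w) v = G.dist a v + 1 ∧ G.dist (hG.median u a w) w = G.dist a v := by
  obtain ⟨hua, haw', hwu⟩ := hG.median_mem u a w
  set m := hG.median u a w
  rw [mem_interval] at ha hua haw' hwu ⊢
  have := hG.dist_eq_succ_or_of_adj hw u
  have hmv : G.dist m v ≤ G.dist m a + G.dist a v := hG.1.dist_triangle
  have huv : G.dist u v ≤ G.dist u m + G.dist m v := hG.1.dist_triangle
  rw [← dist_eq_one_iff_adj]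
  simp only [G.dist_comm] at *
  omega

theorem adj_median_of_square (hG : IsMedianGraph G) {u w a b m : V} (hab : G.Adj a b)
    (ham : G.Adj a m) (hub : G.dist u b < G.dist u a) (hum : G.dist u m < G.dist u a)
    (hm : m ∈ interval G w u) (hmw : G.dist m w + 2 = G.dist b w) :
    G.Adj m (hG.median u b w) := by
  have hbm : b ≠ m := by rintro rfl; omega
  obtain ⟨hbt, hmt, hut⟩ := hG.quadrangle hab ham hbm hub hum
  set t := hG.median u b m
  suffices t = hG.median u b w from this ▸ hmt
  have hbt' : G.dist b t = 1 := dist_eq_one_iff_adj.mpr hbt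
  have hmt' : G.dist m t = 1 := dist_eq_one_iff_adj.mpr hmt
  have := hG.dist_eq_succ_or_of_adj hab u
  have := hG.dist_eq_succ_or_of_adj ham u
  have htw : G.dist t w ≤ G.dist t m + G.dist m w := hG.1.dist_triangle
  have hbw : G.dist b w ≤ G.dist b t + G.dist t w := hG.1.dist_triangle
  rw [mem_interval] at hm
  apply hG.eq_median <;> rw [mem_interval] <;> simp only [G.dist_comm] at * <;> omega

end IsMedianGraph

section closerTo

variable [DecidableEq V]

noncomputable def closerTo (G : SimpleGraph V) (v : V) (D : Finset V) (a : V) : Finset V :=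
  D.filter fun w => G.dist a w < G.dist a v

variable {v : V} {D : Finset V}

theorem card_closerTo_symmDiff_le_one (hG : IsMedianGraph G) (hD : ∀ w ∈ D, G.Adj v w)
    {a b : V} (hab : G.Adj a b) : #(closerTo G v D a ∆ closerTo G v D b) ≤ 1 := by
  refine card_le_one.mpr fun w₁ h₁ w₂ h₂ => ?_
  simp only [closerTo, mem_symmDiff, mem_filter, not_and] at h₁ h₂
  rcases h₁ with ⟨⟨hw₁, ha₁⟩, hb₁⟩ | ⟨⟨hw₁, hb₁⟩, ha₁⟩ <;>
    rcases h₂ with ⟨⟨hw₂, ha₂⟩, hb₂⟩ | ⟨⟨hw₂, hb₂⟩, ha₂⟩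
  · exact hG.eq_of_adj_of_lt_of_not_lt hab (hD _ hw₁) (hD _ hw₂) ha₁ ha₂ (hb₁ hw₁)
      (hb₂ hw₂)
  · have := hG.dist_lt_of_adj_of_lt_of_not_lt hab ha₁ (hb₁ hw₁)
    have := hG.dist_lt_of_adj_of_lt_of_not_lt hab.symm hb₂ (ha₂ hw₂)
    omega
  · have := hG.dist_lt_of_adj_of_lt_of_not_lt hab.symm hb₁ (ha₁ hw₁)
    have := hG.dist_lt_of_adj_of_lt_of_not_lt hab ha₂ (hb₂ hw₂)
    omega
  · exact hG.eq_of_adj_of_lt_of_not_lt hab.symm (hD _ hw₁) (hD _ hw₂) hb₁ hb₂ (ha₁ hw₁)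
      (ha₂ hw₂)

theorem card_closerTo_symmDiff_le_length (hG : IsMedianGraph G) (hD : ∀ w ∈ D, G.Adj v w)
    {a b : V} (p : G.Walk a b) : #(closerTo G v D a ∆ closerTo G v D b) ≤ p.length := by
  induction p with
  | nil => simp
  | @cons a b c hab p ih =>
    calc #(closerTo G v D a ∆ closerTo G v D c)
        ≤ #(closerTo G v D a ∆ closerTo G v D b ∪ closerTo G v D b ∆ closerTo G v D c) :=
          card_le_card (symmDiff_triangle _ _ _)
      _ ≤ #(closerTo G v D a ∆ closerTo G v D b) + #(closerTo G v D b ∆ closerTo G v D c) :=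
          card_union_le _ _
      _ ≤ p.length + 1 := by
          have := card_closerTo_symmDiff_le_one hG hD hab
          omega
      _ = (Walk.cons hab p).length := rfl

theorem card_closerTo_symmDiff_le_dist (hG : IsMedianGraph G) (hD : ∀ w ∈ D, G.Adj v w)
    (a b : V) : #(closerTo G v D a ∆ closerTo G v D b) ≤ G.dist a b := by
  obtain ⟨p, hp⟩ := hG.1.exists_walk_length_eq_dist a b
  exact hp ▸ card_closerTo_symmDiff_le_length hG hD p

theorem card_closerTo_le_dist (hG : IsMedianGraph G) (hD : ∀ w ∈ D, G.Adj v w) (a : V) :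
    #(closerTo G v D a) ≤ G.dist a v := by
  have hv : closerTo G v D v = ∅ := by simp [closerTo]
  simpa [hv, ← bot_eq_empty] using card_closerTo_symmDiff_le_dist hG hD a v

theorem closerTo_eq_of_subset (hG : IsMedianGraph G) (hD : ∀ w ∈ D, G.Adj v w) {a : V}
    {S : Finset V} (hSD : S ⊆ D) (hS : ∀ w ∈ S, G.dist a w < G.dist a v)
    (ha : G.dist a v ≤ #S) :
    closerTo G v D a = S :=
  (eq_of_subset_of_card_le (fun w hw => mem_filter.mpr ⟨hSD hw, hS w hw⟩)
    ((card_closerTo_le_dist hG hD a).trans ha)).symm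

end closerTo

section DownCube

variable [DecidableEq V]

/-- `x S` is the vertex reached from `v` by going down, towards `u`, along the edges `v w`
with `w ∈ S`. -/
structure IsDownCube (G : SimpleGraph V) (u v : V) (W : Finset V) (x : Finset V → V) :
    Prop where
  mem_interval : ∀ S ⊆ W, x S ∈ interval G u v
  dist_eq_card : ∀ S ⊆ W, G.dist (x S) v = #S
  dist_lt : ∀ S ⊆ W, ∀ w ∈ S, G.dist (x S) w < G.dist (x S) v
  adj_insert : ∀ S ⊆ W, ∀ e ∈ W, e ∉ S → G.Adj (x S) (x (insert e S))

variable {u v : V} {W : Finset V} {x : Finset V → V}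

theorem IsDownCube.closerTo_eq (hG : IsMedianGraph G) (hx : IsDownCube G u v W x)
    {D : Finset V} (hD : ∀ w ∈ D, G.Adj v w) (hWD : W ⊆ D) {S : Finset V} (hS : S ⊆ W) :
    closerTo G v D (x S) = S :=
  closerTo_eq_of_subset hG hD (hS.trans hWD) (hx.dist_lt S hS) (hx.dist_eq_card S hS).le

theorem IsDownCube.dist_eq_add_one (hG : IsMedianGraph G) (hx : IsDownCube G u v W x)
    (hW : ∀ w ∈ W, G.Adj v w) {w₀ : V} (hw₀W : w₀ ∉ W) (hvw₀ : G.Adj v w₀)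
    {S : Finset V} (hS : S ⊆ W) : G.dist (x S) w₀ = G.dist (x S) v + 1 := by
  have h := hx.closerTo_eq hG (D := insert w₀ W) (by simpa [hvw₀] using hW)
    (subset_insert w₀ W) hS
  have hlt : ¬ G.dist (x S) w₀ < G.dist (x S) v := fun hlt =>
    hw₀W (hS (h ▸ mem_filter.mpr ⟨mem_insert_self w₀ W, hlt⟩))
  have := hG.dist_eq_succ_or_of_adj hvw₀ (x S)
  omega

theorem IsDownCube.median_down_step (hG : IsMedianGraph G) (hx : IsDownCube G u v W x)
    (hW : ∀ w ∈ W, G.Adj v w) {w₀ : V} (hw₀W : w₀ ∉ W) (hvw₀ : G.Adj v w₀)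
    (huw₀ : G.dist u w₀ < G.dist u v) {S : Finset V} (hS : S ⊆ W) :
    G.Adj (x S) (hG.median u (x S) w₀) ∧ hG.median u (x S) w₀ ∈ interval G u v ∧
      G.dist (hG.median u (x S) w₀) v = G.dist (x S) v + 1 ∧
      G.dist (hG.median u (x S) w₀) w₀ = G.dist (x S) v :=
  hG.median_down_step hvw₀ huw₀ (hx.mem_interval S hS)
    (hx.dist_eq_add_one hG hW hw₀W hvw₀ hS)

theorem IsDownCube.adj_median_insert (hG : IsMedianGraph G) (hx : IsDownCube G u v W x)
    (hW : ∀ w ∈ W, G.Adj v w) {w₀ : V} (hw₀W : w₀ ∉ W) (hvw₀ : G.Adj v w₀)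
    (huw₀ : G.dist u w₀ < G.dist u v) {S : Finset V} (hS : S ⊆ W) {e : V} (he : e ∈ W)
    (heS : e ∉ S) :
    G.Adj (hG.median u (x S) w₀) (hG.median u (x (insert e S)) w₀) := by
  have heS' : insert e S ⊆ W := insert_subset he hS
  obtain ⟨hxm, hm, hmv, hmw₀⟩ := hx.median_down_step hG hW hw₀W hvw₀ huw₀ hS
  have hm : G.dist u (hG.median u (x S) w₀) + G.dist (hG.median u (x S) w₀) v = G.dist u v := hm
  have ha : G.dist u (x S) + G.dist (x S) v = G.dist u v := hx.mem_interval S hS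
  have hb : G.dist u (x (insert e S)) + G.dist (x (insert e S)) v = G.dist u v :=
    hx.mem_interval _ heS'
  have := hx.dist_eq_add_one hG hW hw₀W hvw₀ heS'
  have := hx.dist_eq_card _ heS'
  have := hx.dist_eq_card S hS
  have := card_insert_of_notMem heS
  exact hG.adj_median_of_square (hx.adj_insert S hS e he heS) hxm (by omega) (by omega)
    (hG.median_mem u (x S) w₀).2.2 (by omega)

theorem IsDownCube.extend (hG : IsMedianGraph G) (hx : IsDownCube G u v W x)
    (hW : ∀ w ∈ W, G.Adj v w) {w₀ : V} (hw₀W : w₀ ∉ W) (hvw₀ : G.Adj v w₀)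
    (huw₀ : G.dist u w₀ < G.dist u v) :
    IsDownCube G u v (insert w₀ W)
      (fun S => if w₀ ∈ S then hG.median u (x (S.erase w₀)) w₀ else x S) := by
  set y := fun S => if w₀ ∈ S then hG.median u (x (S.erase w₀)) w₀ else x S
  have hy : ∀ S ⊆ W, y S = x S := fun S hS => if_neg fun h => hw₀W (hS h)
  have hy_insert : ∀ S ⊆ W, y (insert w₀ S) = hG.median u (x S) w₀ := fun S hS => by
    simp only [y, mem_insert_self, if_true, erase_insert fun h => hw₀W (hS h)]
  refine ⟨?_, ?_, ?_, ?_⟩ <;> rw [forall_subset_insert_iff] <;> intro S hS <;>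
    rw [hy S hS, hy_insert S hS] <;>
    obtain ⟨hxm, hm, hmv, hmw₀⟩ := hx.median_down_step hG hW hw₀W hvw₀ huw₀ hS
  · exact ⟨hx.mem_interval S hS, hm⟩
  · refine ⟨hx.dist_eq_card S hS, ?_⟩
    rw [hmv, hx.dist_eq_card S hS, card_insert_of_notMem fun h => hw₀W (hS h)]
  · refine ⟨hx.dist_lt S hS, fun w hw => ?_⟩
    rcases mem_insert.mp hw with rfl | hw
    · omega
    · have htri : G.dist (hG.median u (x S) w₀) w ≤
          G.dist (hG.median u (x S) w₀) (x S) + G.dist (x S) w := hG.1.dist_triangle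
      rw [dist_eq_one_iff_adj.mpr hxm.symm] at htri
      have := hx.dist_lt S hS w hw
      omega
  · refine ⟨fun e he heS => ?_, fun e he heS => ?_⟩
    · rcases mem_insert.mp he with rfl | he
      · rwa [hy_insert S hS]
      · rw [hy _ (insert_subset he hS)]
        exact hx.adj_insert S hS e he heS
    · rw [mem_insert, not_or] at heS
      have he : e ∈ W := (mem_insert.mp he).resolve_left heS.1
      rw [insert_comm, hy_insert _ (insert_subset he hS)]
      exact hx.adj_median_insert hG hW hw₀W hvw₀ huw₀ hS he heS.2

theorem exists_isDownCube (hG : IsMedianGraph G) (u v : V) (W : Finset V)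
    (hW : ∀ w ∈ W, G.Adj v w ∧ G.dist u w < G.dist u v) : ∃ x, IsDownCube G u v W x := by
  induction W using Finset.induction_on with
  | empty =>
    refine ⟨fun _ => v, fun S _ => ?_, fun S hS => ?_, fun S hS => ?_, fun S _ e he => ?_⟩
    · simp [mem_interval]
    · simp [subset_empty.mp hS]
    · simp [subset_empty.mp hS]
    · exact absurd he (notMem_empty e)
  | @insert w₀ W hw₀W ih =>
    have hW' : ∀ w ∈ W, G.Adj v w ∧ G.dist u w < G.dist u v := fun w hw =>
      hW w (mem_insert_of_mem hw)
    obtain ⟨x, hx⟩ := ih hW'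
    obtain ⟨hvw₀, huw₀⟩ := hW w₀ (mem_insert_self w₀ W)
    exact ⟨_, hx.extend hG (fun w hw => (hW' w hw).1) hw₀W hvw₀ huw₀⟩

theorem IsDownCube.injOn (hG : IsMedianGraph G) (hx : IsDownCube G u v W x)
    (hW : ∀ w ∈ W, G.Adj v w) {S T : Finset V} (hS : S ⊆ W) (hT : T ⊆ W) (h : x S = x T) :
    S = T := by
  rw [← hx.closerTo_eq hG hW subset_rfl hS, ← hx.closerTo_eq hG hW subset_rfl hT, h]

theorem IsDownCube.adj_iff (hG : IsMedianGraph G) (hx : IsDownCube G u v W x)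
    (hW : ∀ w ∈ W, G.Adj v w) {S T : Finset V} (hS : S ⊆ W) (hT : T ⊆ W) :
    G.Adj (x S) (x T) ↔ #(S ∆ T) = 1 := by
  constructor
  · intro h
    have hle := card_closerTo_symmDiff_le_dist hG hW (x S) (x T)
    rw [hx.closerTo_eq hG hW subset_rfl hS, hx.closerTo_eq hG hW subset_rfl hT,
      dist_eq_one_iff_adj.mpr h] at hle
    have hne : S ∆ T ≠ ∅ := fun h' => h.ne (by rw [symmDiff_eq_bot.mp h'])
    have := card_pos.mpr (nonempty_iff_ne_empty.mpr hne)
    omega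
  · intro h
    obtain ⟨e, he⟩ := card_eq_one.mp h
    have hT' : T = S ∆ {e} := by rw [← he, symmDiff_symmDiff_cancel_left]
    by_cases heS : e ∈ S
    · have heT : e ∉ T := by simp [hT', mem_symmDiff, heS]
      have hST : S = insert e T := by ext y; by_cases y = e <;> simp_all [mem_symmDiff]
      rw [hST] at hS ⊢
      exact (hx.adj_insert T hT e (hS (mem_insert_self e T)) heT).symm
    · have hST : T = insert e S := by ext y; by_cases y = e <;> simp_all [mem_symmDiff]
      rw [hST] at hT ⊢
      exact hx.adj_insert S hS e (hT (mem_insert_self e S)) heS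

theorem IsDownCube.nonempty_embedding (hG : IsMedianGraph G) (hx : IsDownCube G u v W x)
    (hW : ∀ w ∈ W, G.Adj v w) : Nonempty (cubeGraph #W ↪g G) := by
  let ι : Fin #W → V := fun i => W.equivFin.symm i
  have hι : Function.Injective ι := Subtype.val_injective.comp W.equivFin.symm.injective
  let σ : (Fin #W → Bool) → Finset V := fun g => (univ.filter (g · = true)).image ι
  have hσW : ∀ g, σ g ⊆ W := fun g y hy => by
    obtain ⟨i, -, rfl⟩ := mem_image.mp hy
    exact (W.equivFin.symm i).2
  have hσ : ∀ g h, σ g ∆ σ h = (univ.filter fun i => g i ≠ h i).image ι := fun g h => by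
    rw [← image_symmDiff _ _ hι]
    congr 1
    ext i
    simp only [mem_symmDiff, mem_filter, mem_univ, true_and]
    cases g i <;> cases h i <;> decide
  have hσ_inj : Function.Injective σ := fun g h hgh => by
    have := hσ g h
    rw [hgh, symmDiff_self, eq_comm, bot_eq_empty, image_eq_empty, filter_eq_empty_iff] at this
    simpa [funext_iff] using this
  refine ⟨⟨⟨x ∘ σ, fun g h hgh => hσ_inj (hx.injOn hG hW (hσW g) (hσW h) hgh)⟩,
    ?_⟩⟩
  intro g h
  change G.Adj (x (σ g)) (x (σ h)) ↔ _
  rw [hx.adj_iff hG hW (hσW g) (hσW h), hσ, card_image_of_injective _ hι, cubeGraph_adj_iff]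

end DownCube

section Counting

variable [Fintype V]

noncomputable def downNeighborFinset (G : SimpleGraph V) [DecidableRel G.Adj] (u v : V) :
    Finset V :=
  {w | G.Adj v w ∧ G.dist u w < G.dist u v}

variable [DecidableEq V] [DecidableRel G.Adj]

theorem card_edgeFinset_le_sum_card_downNeighborFinset (hG : IsMedianGraph G) (u : V) :
    #G.edgeFinset ≤ ∑ v, #(downNeighborFinset G u v) := by
  calc #G.edgeFinset
      ≤ #(univ.biUnion fun v => (downNeighborFinset G u v).image fun w => s(v, w)) := by
        refine card_le_card fun e he => ?_
        induction e using Sym2.ind with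
        | h a b =>
          have hab : G.Adj a b := mem_edgeFinset.mp he
          simp only [mem_biUnion, mem_image, mem_univ, true_and, downNeighborFinset, mem_filter]
          rcases hG.dist_eq_succ_or_of_adj hab u with h | h
          · exact ⟨b, a, ⟨hab.symm, by omega⟩, Sym2.eq_swap⟩
          · exact ⟨a, b, ⟨hab, by omega⟩, rfl⟩
    _ ≤ ∑ v, #((downNeighborFinset G u v).image fun w => s(v, w)) := card_biUnion_le
    _ ≤ ∑ v, #(downNeighborFinset G u v) := sum_le_sum fun v _ => card_image_le

theorem nonempty_cubeGraph_embedding (hG : IsMedianGraph G) (u v : V) :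
    Nonempty (cubeGraph #(downNeighborFinset G u v) ↪g G) := by
  have hW : ∀ w ∈ downNeighborFinset G u v, G.Adj v w ∧ G.dist u w < G.dist u v := by
    simp [downNeighborFinset]
  obtain ⟨x, hx⟩ := exists_isDownCube hG u v _ hW
  exact hx.nonempty_embedding hG fun w hw => (hW w hw).1

end Counting

end

theorem edges_le_dim_mul_card_general {V : Type*} [Fintype V] [DecidableEq V]
    (G : SimpleGraph V) [DecidableRel G.Adj] (hG : IsMedianGraph G) (d : ℕ)
    (hmax : ∀ k : ℕ, Nonempty (cubeGraph k ↪g G) → k ≤ d) :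
    G.edgeFinset.card ≤ d * Fintype.card V := by
  rcases isEmpty_or_nonempty V with hV | ⟨⟨u⟩⟩
  · simp [Subsingleton.elim G ⊥]
  calc #G.edgeFinset ≤ ∑ v, #(downNeighborFinset G u v) :=
        card_edgeFinset_le_sum_card_downNeighborFinset hG u
    _ ≤ ∑ _v : V, d := sum_le_sum fun v _ => hmax _ (nonempty_cubeGraph_embedding hG u v)
    _ = d * Fintype.card V := by rw [sum_const, card_univ, smul_eq_mul, mul_comm]

/-- A median graph of dimension `d` (largest induced hypercube has dimension `d`)
with `n` vertices has at most `d·n` edges. -/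
theorem edges_le_dim_mul_card {V : Type*} [Fintype V] [DecidableEq V]
    (G : SimpleGraph V) [DecidableRel G.Adj] (hG : IsMedianGraph G) (d : ℕ)
    (hcube : Nonempty (cubeGraph d ↪g G))
    (hmax : ∀ k : ℕ, Nonempty (cubeGraph k ↪g G) → k ≤ d) :
    G.edgeFinset.card ≤ d * Fintype.card V :=
  edges_le_dim_mul_card_general G hG d hmax
end

section
/- Let G be a median graph with weight function w. Then the median set Med_w(G) = argmin_x F_w(x) equals the intersection of all majoritary halfspaces of G, i.e., halfspaces H with w(H) > w(V)/2 (majority rule). -/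
/-!
Crossing an edge `ab` of a median graph changes the distance to every vertex by exactly one, so
`F_w(b) - F_w(a) = 2 w(W(a,b)) - w(V)`. Hence a vertex lying in every majoritary halfspace
can be reached from any `y` along a geodesic on which `F_w` never increases. Conversely,
halfspaces are convex, hence gated: if `x ∉ H = W(u,v)`, the first step `y` from `x` towards
its gate in `H` satisfies `H ⊆ W(y,x)`, so `F_w(y) < F_w(x)` when `H` is majoritary.
-/

open Finset

def Wset {V : Type*} (G : SimpleGraph V) (u v : V) : Set V :=
  {x | G.dist u x < G.dist v x}

open SimpleGraph

section

variable {V : Type*} {G : SimpleGraph V}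

def IsIntervalConvex (G : SimpleGraph V) (S : Set V) : Prop :=
  ∀ ⦃x⦄, x ∈ S → ∀ ⦃z⦄, z ∈ S → interval G x z ⊆ S

namespace SimpleGraph.Connected

theorem exists_adj_dist_add_one_eq (hG : G.Connected) {u v : V} (huv : u ≠ v) :
    ∃ w, G.Adj u w ∧ G.dist w v + 1 = G.dist u v := by
  obtain ⟨p, hp⟩ := hG.exists_walk_length_eq_dist u v
  cases p with
  | nil => exact absurd rfl huv
  | @cons _ w _ hadj q =>
    refine ⟨w, hadj, le_antisymm ?_ ?_⟩
    · rw [← hp, Walk.length_cons]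
      exact Nat.add_le_add_right (dist_le q) 1
    · have := hG.dist_triangle (u := u) (v := w) (w := v)
      rw [dist_eq_one_iff_adj.mpr hadj] at this
      omega

theorem interval_subset_Wset (hG : G.Connected) {u v x : V} (hx : x ∈ Wset G u v) :
    interval G u x ⊆ Wset G u v := by
  intro s hs
  simp only [interval, Wset, Set.mem_ofPred_eq] at hs hx ⊢
  have := hG.dist_triangle (u := v) (v := s) (w := x)
  omega

end SimpleGraph.Connected

namespace IsMedianGraph

theorem connected (hG : IsMedianGraph G) : G.Connected := hG.1

theorem exists_median (hG : IsMedianGraph G) (x y z : V) :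
    ∃ m, m ∈ interval G x y ∧ m ∈ interval G y z ∧ m ∈ interval G z x :=
  (hG.2 x y z).exists

theorem median_unique (hG : IsMedianGraph G) {x y z m m' : V}
    (hm : m ∈ interval G x y ∧ m ∈ interval G y z ∧ m ∈ interval G z x)
    (hm' : m' ∈ interval G x y ∧ m' ∈ interval G y z ∧ m' ∈ interval G z x) : m = m' :=
  (hG.2 x y z).unique hm hm'

theorem dist_eq_add_one_or_of_adj (hG : IsMedianGraph G) {a b : V} (hab : G.Adj a b) (c : V) :
    G.dist a c = G.dist b c + 1 ∨ G.dist b c = G.dist a c + 1 := by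
  obtain ⟨m, hab', hbc, hca⟩ := hG.exists_median a b c
  simp only [interval, Set.mem_ofPred_eq] at hab' hbc hca
  have hab1 : G.dist a b = 1 := dist_eq_one_iff_adj.mpr hab
  have hba1 : G.dist b a = 1 := dist_eq_one_iff_adj.mpr hab.symm
  have hac : G.dist c a = G.dist a c := dist_comm
  have hbc' : G.dist c b = G.dist b c := dist_comm
  rcases Nat.eq_zero_or_pos (G.dist a m) with ham | ham
  · obtain rfl := hG.connected.dist_eq_zero_iff.mp ham
    omega
  · obtain rfl := hG.connected.dist_eq_zero_iff.mp (show G.dist m b = 0 by omega)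
    omega

theorem mem_Wset_of_adj_of_adj (hG : IsMedianGraph G) {u v y₁ y₂ t : V} (huv : G.Adj u v)
    (h₁ : y₁ ∈ Wset G u v) (h₂ : y₂ ∈ Wset G u v) (hy : G.dist y₁ y₂ = 2)
    (ht₁ : G.Adj y₁ t) (ht₂ : G.Adj y₂ t)
    (hu₁ : G.dist u y₁ + 1 = G.dist u t) (hu₂ : G.dist u y₂ + 1 = G.dist u t) :
    t ∈ Wset G u v := by
  by_contra ht
  simp only [Wset, Set.mem_ofPred_eq] at h₁ h₂ ht
  have hv₁ := hG.dist_eq_add_one_or_of_adj huv y₁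
  have hv₂ := hG.dist_eq_add_one_or_of_adj huv y₂
  have hvt := hG.dist_eq_add_one_or_of_adj huv t
  have d₁ : G.dist y₁ t = 1 := dist_eq_one_iff_adj.mpr ht₁
  have d₂ : G.dist y₂ t = 1 := dist_eq_one_iff_adj.mpr ht₂
  -- `t` and the median `m` of `y₁, y₂, u` are both medians of `y₁, y₂, v`.
  obtain ⟨m, hm₁₂, hm₂u, hmu₁⟩ := hG.exists_median y₁ y₂ u
  simp only [interval, Set.mem_ofPred_eq] at hm₁₂ hm₂u hmu₁
  have hvm := hG.connected.dist_triangle (u := v) (v := u) (w := m)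
  have huv1 : G.dist v u = 1 := dist_eq_one_iff_adj.mpr huv.symm
  have hmv₂ := hG.connected.dist_triangle (u := y₂) (v := m) (w := v)
  have hmv₁ := hG.connected.dist_triangle (u := v) (v := m) (w := y₁)
  suffices t = m by subst this; grind [SimpleGraph.dist_comm]
  refine hG.median_unique (x := y₁) (y := y₂) (z := v) ⟨?_, ?_, ?_⟩ ⟨?_, ?_, ?_⟩ <;>
    simp only [interval, Set.mem_ofPred_eq] <;> grind [SimpleGraph.dist_comm]

theorem exists_adj_dist_add_one_eq_of_notMem_Wset (hG : IsMedianGraph G) {u v x t : V}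
    (hx : x ∈ Wset G u v) (ht : t ∉ Wset G u v) :
    ∃ y, G.Adj t y ∧ G.dist u y + 1 = G.dist u t ∧ G.dist x y + 1 = G.dist x t := by
  -- step from `t` towards the median of `x, t, u`
  obtain ⟨a, hxt, htu, hux⟩ := hG.exists_median x t u
  have hat : a ≠ t := by
    rintro rfl
    exact ht (hG.connected.interval_subset_Wset hx hux)
  obtain ⟨y, hty, hya⟩ := hG.connected.exists_adj_dist_add_one_eq hat.symm
  simp only [interval, Set.mem_ofPred_eq] at hxt htu hux
  have d₁ : G.dist t y = 1 := dist_eq_one_iff_adj.mpr hty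
  have := hG.connected.dist_triangle (u := u) (v := y) (w := t)
  have := hG.connected.dist_triangle (u := x) (v := y) (w := t)
  have := hG.connected.dist_triangle (u := u) (v := a) (w := y)
  have := hG.connected.dist_triangle (u := x) (v := a) (w := y)
  exact ⟨y, hty, by grind [SimpleGraph.dist_comm], by grind [SimpleGraph.dist_comm]⟩

theorem isIntervalConvex_Wset (hG : IsMedianGraph G) {u v : V} (huv : G.Adj u v) :
    IsIntervalConvex G (Wset G u v) := by
  intro x hx z hz t ht
  -- The neighbours of `t` towards `x` and `z` are closer to `u`, hence in the halfspace by
  -- induction, and then local convexity puts `t` there too.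
  induction hn : G.dist u t using Nat.strong_induction_on generalizing t with
  | _ n ih =>
  by_contra htW
  obtain ⟨y₁, hty₁, hu₁, hx₁⟩ := hG.exists_adj_dist_add_one_eq_of_notMem_Wset hx htW
  obtain ⟨y₂, hty₂, hu₂, hz₂⟩ := hG.exists_adj_dist_add_one_eq_of_notMem_Wset hz htW
  simp only [interval, Set.mem_ofPred_eq] at ht
  have d₁ : G.dist t y₁ = 1 := dist_eq_one_iff_adj.mpr hty₁
  have d₂ : G.dist t y₂ = 1 := dist_eq_one_iff_adj.mpr hty₂
  have := hG.connected.dist_triangle (u := x) (v := y₁) (w := z)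
  have := hG.connected.dist_triangle (u := y₁) (v := t) (w := z)
  have := hG.connected.dist_triangle (u := x) (v := y₂) (w := z)
  have := hG.connected.dist_triangle (u := x) (v := t) (w := y₂)
  have := hG.connected.dist_triangle (u := y₁) (v := y₂) (w := z)
  have := hG.connected.dist_triangle (u := y₁) (v := t) (w := y₂)
  have hy₁ : y₁ ∈ Wset G u v := ih _ (by omega) (t := y₁)
    (by simp only [interval, Set.mem_ofPred_eq]; grind [SimpleGraph.dist_comm]) rfl
  have hy₂ : y₂ ∈ Wset G u v := ih _ (by omega) (t := y₂)
    (by simp only [interval, Set.mem_ofPred_eq]; grind [SimpleGraph.dist_comm]) rfl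
  exact htW (hG.mem_Wset_of_adj_of_adj huv hy₁ hy₂ (by grind [SimpleGraph.dist_comm])
    hty₁.symm hty₂.symm (by omega) (by omega))

theorem mem_interval_of_isIntervalConvex (hG : IsMedianGraph G) {S : Set V}
    (hS : IsIntervalConvex G S) {x g s : V} (hg : g ∈ S)
    (hmin : ∀ s ∈ S, G.dist x g ≤ G.dist x s) (hs : s ∈ S) : g ∈ interval G x s := by
  obtain ⟨m, hxg, hgs, hsx⟩ := hG.exists_median x g s
  have hmg : m = g := by
    have := hmin m (hS hg hs hgs)
    simp only [interval, Set.mem_ofPred_eq] at hxg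
    exact hG.connected.dist_eq_zero_iff.mp (by omega)
  subst hmg
  simp only [interval, Set.mem_ofPred_eq] at hsx ⊢
  grind [SimpleGraph.dist_comm]

theorem exists_adj_Wset_subset (hG : IsMedianGraph G) {u v x : V} (huv : G.Adj u v)
    (hx : x ∉ Wset G u v) : ∃ y, G.Adj x y ∧ Wset G u v ⊆ Wset G y x := by
  have hu : u ∈ Wset G u v := by
    simp [Wset, dist_eq_one_iff_adj.mpr huv.symm]
  -- the gate of `x` in the halfspace
  set g := Function.argminOn (G.dist x) (Wset G u v) ⟨u, hu⟩
  have hg : g ∈ Wset G u v := Function.argminOn_mem _ _ _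
  have hgate : ∀ s ∈ Wset G u v, g ∈ interval G x s := fun s hs =>
    hG.mem_interval_of_isIntervalConvex (hG.isIntervalConvex_Wset huv) hg
      (fun s' hs' => Function.argminOn_le _ _ hs') hs
  obtain ⟨y, hxy, hyg⟩ :=
    hG.connected.exists_adj_dist_add_one_eq (ne_of_mem_of_not_mem hg hx).symm
  refine ⟨y, hxy, fun s hs => ?_⟩
  have hgs := hgate s hs
  simp only [interval, Wset, Set.mem_ofPred_eq] at hgs ⊢
  have := hG.connected.dist_triangle (u := y) (v := g) (w := s)
  omega

end IsMedianGraph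

noncomputable def distSum [Fintype V] (G : SimpleGraph V) (w : V → ℝ) (x : V) : ℝ :=
  ∑ v, w v * (G.dist x v : ℝ)

namespace IsMedianGraph

variable [Fintype V]

theorem distSum_sub_distSum_of_adj (hG : IsMedianGraph G) (w : V → ℝ) {a b : V}
    (hab : G.Adj a b) :
    distSum G w b - distSum G w a =
      2 * ∑ c ∈ univ.filter (fun c => G.dist a c < G.dist b c), w c - ∑ c, w c := by
  rw [distSum, distSum, ← sum_sub_distrib, sum_filter, mul_sum, ← sum_sub_distrib]
  refine sum_congr rfl fun c _ => ?_
  rcases hG.dist_eq_add_one_or_of_adj hab c with h | h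
  · rw [if_neg (by omega), h]; push_cast; ring
  · rw [if_pos (by omega), h]; push_cast; ring

theorem mem_Wset_of_forall_distSum_le (hG : IsMedianGraph G) {w : V → ℝ} (hw : ∀ v, 0 ≤ w v)
    {x u v : V} (hx : ∀ y, distSum G w x ≤ distSum G w y) (huv : G.Adj u v)
    (hmaj : ∑ z ∈ univ.filter (fun z => G.dist u z < G.dist v z), w z > (∑ z, w z) / 2) :
    x ∈ Wset G u v := by
  by_contra hxW
  obtain ⟨y, hxy, hsub⟩ := hG.exists_adj_Wset_subset huv hxW
  have hle : ∑ z ∈ univ.filter (fun z => G.dist u z < G.dist v z), w z ≤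
      ∑ z ∈ univ.filter (fun z => G.dist y z < G.dist x z), w z :=
    sum_le_sum_of_subset_of_nonneg
      (fun z hz => by simpa [Wset] using hsub (by simpa [Wset] using hz)) fun z _ _ => hw z
  have := hG.distSum_sub_distSum_of_adj w hxy.symm
  linarith [hx y]

theorem distSum_le_of_forall_mem_Wset (hG : IsMedianGraph G) (w : V → ℝ) {x : V}
    (hx : ∀ u v, G.Adj u v →
      ∑ z ∈ univ.filter (fun z => G.dist u z < G.dist v z), w z > (∑ z, w z) / 2 →
        x ∈ Wset G u v)
    (y : V) : distSum G w x ≤ distSum G w y := by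
  induction hn : G.dist y x generalizing y with
  | zero => rw [hG.connected.dist_eq_zero_iff.mp hn]
  | succ n ih =>
    obtain ⟨y', hyy', hy'x⟩ :=
      hG.connected.exists_adj_dist_add_one_eq (u := y) (v := x) (by rintro rfl; simp at hn)
    have hstep : distSum G w y' ≤ distSum G w y := by
      by_contra hlt
      have := hG.distSum_sub_distSum_of_adj w hyy'
      have hxW := hx y y' hyy' (by linarith)
      simp only [Wset, Set.mem_ofPred_eq] at hxW
      omega
    exact (ih y' (by omega)).trans hstep

end IsMedianGraph

end

/-- Majority rule: the median set of a median graph is the intersection of all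
majoritary halfspaces (halfspaces of weight strictly more than half the total). -/
theorem majority_rule {V : Type*} [Fintype V] (G : SimpleGraph V)
    (hG : IsMedianGraph G) (w : V → ℝ) (hw : ∀ v, 0 ≤ w v) :
    {x : V | ∀ y : V, (∑ v : V, w v * (G.dist x v : ℝ)) ≤ ∑ v : V, w v * (G.dist y v : ℝ)} =
      ⋂₀ {H : Set V | ∃ u v : V, G.Adj u v ∧ H = Wset G u v ∧
        (∑ z ∈ univ.filter (fun z => G.dist u z < G.dist v z), w z) > (∑ z : V, w z) / 2} := by
  ext x
  simp only [Set.mem_ofPred_eq, Set.mem_sInter]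
  constructor
  · rintro hx _ ⟨u, v, huv, rfl, hmaj⟩
    exact hG.mem_Wset_of_forall_distSum_le hw hx huv hmaj
  · intro hx y
    exact hG.distSum_le_of_forall_mem_Wset w
      (fun u v huv hmaj => hx _ ⟨u, v, huv, rfl, hmaj⟩) y
end

section
/- Let G be a median graph with weight function w, and suppose H' and H'' are two disjoint halfspaces of G (defined by two laminar Θ-classes) that both intersect the median set Med_w(G). Then w(v) = 0 for every vertex v not in H' ∪ H''. -/
/-- The median set of `G` with respect to the weight function `w`. -/
def medianSet {V : Type*} [Fintype V] (G : SimpleGraph V) (w : V → ℝ) : Set V :=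
  {x | ∀ y : V, (∑ v : V, w v * (G.dist x v : ℝ)) ≤ ∑ v : V, w v * (G.dist y v : ℝ)}

namespace MedianAux

open scoped Classical

variable {V : Type*} {G : SimpleGraph V}

lemma dcomm {V : Type*} {G : SimpleGraph V} (p q : V) : G.dist p q = G.dist q p :=
  SimpleGraph.dist_comm

lemma mem_interval_iff {u v z : V} :
    z ∈ interval G u v ↔ G.dist u z + G.dist z v = G.dist u v := Iff.rfl

lemma mem_Wset_iff {u v z : V} : z ∈ Wset G u v ↔ G.dist u z < G.dist v z := Iff.rfl

/-- For an edge `pq` and any vertex `z`, the distances from `z` to `p` and `q`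
differ by exactly one. -/
lemma pm1 (hG : IsMedianGraph G) {p q : V} (h : G.Adj p q) (z : V) :
    G.dist p z + 1 = G.dist q z ∨ G.dist q z + 1 = G.dist p z := by
  obtain ⟨hc, hmed⟩ := hG
  obtain ⟨m, ⟨h1, h2, h3⟩, -⟩ := hmed p q z
  rw [mem_interval_iff] at h1 h2 h3
  have hpq : G.dist p q = 1 := SimpleGraph.dist_eq_one_iff_adj.mpr h
  rw [hpq] at h1
  rcases Nat.eq_zero_or_pos (G.dist p m) with h0 | hpos
  · have hm : p = m := hc.dist_eq_zero_iff.mp h0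
    rw [← hm] at h2
    rw [dcomm q p, hpq] at h2
    left; omega
  · have h0' : G.dist m q = 0 := by omega
    have hm : m = q := hc.dist_eq_zero_iff.mp h0'
    rw [hm] at h3
    rw [dcomm q p, hpq] at h3
    right
    rw [dcomm q z, dcomm p z]
    omega

/-- Same as `pm1` but with distances measured from the far vertex first. -/
lemma pm1' (hG : IsMedianGraph G) {p q : V} (h : G.Adj p q) (z : V) :
    G.dist z p + 1 = G.dist z q ∨ G.dist z q + 1 = G.dist z p := by
  have := pm1 hG h z
  rwa [dcomm p z, dcomm q z] at this

lemma mem_W_or (hG : IsMedianGraph G) {a b : V} (hab : G.Adj a b) (z : V) :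
    z ∈ Wset G a b ∨ z ∈ Wset G b a := by
  have := pm1 hG hab z
  rw [mem_Wset_iff, mem_Wset_iff]
  omega

lemma not_mem_both {a b z : V} (h1 : z ∈ Wset G a b) (h2 : z ∈ Wset G b a) : False := by
  rw [mem_Wset_iff] at h1 h2; omega

lemma W_plus_one (hG : IsMedianGraph G) {a b : V} (hab : G.Adj a b) {z : V}
    (hz : z ∈ Wset G a b) : G.dist b z = G.dist a z + 1 := by
  have := pm1 hG hab z
  rw [mem_Wset_iff] at hz
  omega

/-- A crossing edge: `u ∈ W(a,b)`, `t ∈ W(b,a)`, `u ~ t`. Then going from `u` to `t`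
moves away from `a` and towards `b`. -/
lemma crossing (hG : IsMedianGraph G) {a b : V} (hab : G.Adj a b) {u t : V}
    (hut : G.Adj u t) (hu : u ∈ Wset G a b) (ht : t ∈ Wset G b a) :
    G.dist a t = G.dist a u + 1 ∧ G.dist b u = G.dist b t + 1 := by
  have h1 : G.dist b u = G.dist a u + 1 := W_plus_one hG hab hu
  have h2 : G.dist a t = G.dist b t + 1 := W_plus_one hG hab.symm ht
  have h3 := pm1' hG hut a
  have h4 := pm1' hG hut b
  omega

/-- Stepping towards `a` from a vertex of `W(a,b)` stays in `W(a,b)`. -/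
lemma descent (hG : IsMedianGraph G) {a b : V} (hab : G.Adj a b) {u m : V}
    (hu : u ∈ Wset G a b) (hum : G.Adj u m) (hm : G.dist a m + 1 = G.dist a u) :
    m ∈ Wset G a b := by
  rcases mem_W_or hG hab m with h | h
  · exact h
  · exact absurd ((crossing hG hab hum hu h).1) (by omega)

/-- Quadrangle condition, derived from the existence of medians. -/
lemma qc (hG : IsMedianGraph G) {x y c : V} (hxy : G.dist x y = 2)
    (hx : G.dist c x = G.dist c y) :
    ∃ q : V, G.Adj x q ∧ G.Adj q y ∧ G.dist c q + 1 = G.dist c x := by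
  obtain ⟨hc, hmed⟩ := hG
  obtain ⟨m, ⟨h1, h2, h3⟩, -⟩ := hmed x y c
  rw [mem_interval_iff] at h1 h2 h3
  rw [hxy] at h1
  have hxm : G.dist x m ≠ 0 := by
    intro h0
    have he : x = m := hc.dist_eq_zero_iff.mp h0
    rw [← he] at h2
    rw [dcomm y x, hxy, dcomm x c,
      dcomm y c] at h2
    omega
  have hmy : G.dist m y ≠ 0 := by
    intro h0
    have he : m = y := hc.dist_eq_zero_iff.mp h0
    rw [he] at h3
    rw [dcomm y x, hxy] at h3
    omega
  have hx1 : G.dist x m = 1 := by omega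
  have hy1 : G.dist m y = 1 := by omega
  refine ⟨m, SimpleGraph.dist_eq_one_iff_adj.mp hx1, SimpleGraph.dist_eq_one_iff_adj.mp hy1, ?_⟩
  rw [dcomm m x, hx1] at h3
  omega

/-- Local convexity of halfspaces: two vertices of `W(a,b)` at distance 2 cannot have a
common neighbor in `W(b,a)`. -/
lemma locConv (hG : IsMedianGraph G) {a b u v z : V} (hab : G.Adj a b)
    (hu : u ∈ Wset G a b) (hv : v ∈ Wset G a b) (huz : G.Adj u z) (hzv : G.Adj z v)
    (hz : z ∈ Wset G b a) (huv : G.dist u v = 2) : False := by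
  have hc := hG.1
  have hmed := hG.2
  have c1 := crossing hG hab huz hu hz
  have c2 := crossing hG hab hzv.symm hv hz
  have hbu : G.dist b u = G.dist a u + 1 := W_plus_one hG hab hu
  have hbv : G.dist b v = G.dist a v + 1 := W_plus_one hG hab hv
  have hav : G.dist a v = G.dist a u := by omega
  have haz : G.dist a z = G.dist a u + 1 := by omega
  have hbz : G.dist b z = G.dist a u := by omega
  -- the median of (u, v, a)
  obtain ⟨mu, ⟨m1, m2, m3⟩, -⟩ := hmed u v a
  rw [mem_interval_iff] at m1 m2 m3
  rw [huv] at m1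
  rw [dcomm v a, hav] at m2
  have hmu_ne_u : G.dist u mu ≠ 0 := by
    intro h0
    have he : u = mu := hc.dist_eq_zero_iff.mp h0
    rw [← he] at m2
    rw [dcomm v u, huv, dcomm u a] at m2
    omega
  have hmu_ne_v : G.dist mu v ≠ 0 := by
    intro h0
    have he : mu = v := hc.dist_eq_zero_iff.mp h0
    rw [he] at m3
    rw [dcomm v u, huv] at m3
    omega
  have hu1 : G.dist u mu = 1 := by omega
  have hv1 : G.dist mu v = 1 := by omega
  have hamu : G.dist a mu + 1 = G.dist a u := by
    rw [dcomm mu u, hu1] at m3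
    omega
  have hmuW : mu ∈ Wset G a b :=
    descent hG hab hu (SimpleGraph.dist_eq_one_iff_adj.mp hu1) hamu
  have hbmu : G.dist b mu = G.dist a mu + 1 := W_plus_one hG hab hmuW
  have hduz : G.dist u z = 1 := SimpleGraph.dist_eq_one_iff_adj.mpr huz
  have hdzv : G.dist z v = 1 := SimpleGraph.dist_eq_one_iff_adj.mpr hzv
  -- z and mu are both medians of (u, v, b)
  obtain ⟨mm, -, huniq⟩ := hmed u v b
  have hz_eq : z = mm := by
    apply huniq
    refine ⟨?_, ?_, ?_⟩ <;> rw [mem_interval_iff]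
    · omega
    · have e1 : G.dist v z = G.dist z v := dcomm v z
      have e2 : G.dist z b = G.dist b z := dcomm z b
      have e3 : G.dist v b = G.dist b v := dcomm v b
      omega
    · have e1 : G.dist z u = G.dist u z := dcomm z u
      omega
  have hmu_eq : mu = mm := by
    apply huniq
    refine ⟨?_, ?_, ?_⟩ <;> rw [mem_interval_iff]
    · have e1 : G.dist mu v = G.dist v mu := dcomm mu v
      omega
    · have e1 : G.dist v mu = G.dist mu v := dcomm v mu
      have e2 : G.dist mu b = G.dist b mu := dcomm mu b
      have e3 : G.dist v b = G.dist b v := dcomm v b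
      omega
    · have e1 : G.dist mu u = G.dist u mu := dcomm mu u
      omega
  have hzmu : z = mu := hz_eq.trans hmu_eq.symm
  rw [mem_Wset_iff] at hz
  rw [hzmu] at hz
  omega

/-- A chain of adjacent vertices bounds the distance. -/
lemma chain_dist_le (hc : G.Connected) (p : ℕ → V) :
    ∀ n : ℕ, (∀ i < n, G.Adj (p i) (p (i + 1))) → G.dist (p 0) (p n) ≤ n := by
  intro n
  induction n with
  | zero => simp
  | succ n ih =>
    intro hadj
    have h1 : G.dist (p 0) (p n) ≤ n := ih fun i hi => hadj i (by omega)
    have h2 : G.dist (p n) (p (n + 1)) = 1 :=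
      SimpleGraph.dist_eq_one_iff_adj.mpr (hadj n (by omega))
    have := hc.dist_triangle (u := p 0) (v := p n) (w := p (n + 1))
    omega

/-- On a geodesic chain, distances between intermediate vertices are the index
differences. -/
lemma chain_dist_between (hc : G.Connected) (p : ℕ → V) {n : ℕ}
    (hadj : ∀ i < n, G.Adj (p i) (p (i + 1))) (hd : G.dist (p 0) (p n) = n)
    {i j : ℕ} (hij : i ≤ j) (hjn : j ≤ n) : G.dist (p i) (p j) = j - i := by
  have hA : G.dist (p 0) (p i) ≤ i :=
    chain_dist_le hc p i fun t ht => hadj t (by omega)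
  have hB : G.dist (p i) (p j) ≤ j - i := by
    have h := chain_dist_le hc (fun t => p (i + t)) (j - i)
      (fun t ht => hadj (i + t) (by omega))
    have h2 : G.dist (p (i + 0)) (p (i + (j - i))) ≤ j - i := h
    rwa [Nat.add_zero, Nat.add_sub_cancel' hij] at h2
  have hC : G.dist (p j) (p n) ≤ n - j := by
    have h := chain_dist_le hc (fun t => p (j + t)) (n - j)
      (fun t ht => hadj (j + t) (by omega))
    have h2 : G.dist (p (j + 0)) (p (j + (n - j))) ≤ n - j := h
    rwa [Nat.add_zero, Nat.add_sub_cancel' hjn] at h2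
  have t1 := hc.dist_triangle (u := p 0) (v := p i) (w := p n)
  have t2 := hc.dist_triangle (u := p i) (v := p j) (w := p n)
  omega

/-- Build a geodesic chain from `u` to `v` through a point `z` of the interval. -/
lemma exists_chain_through (hc : G.Connected) (u v z : V) (hz : z ∈ interval G u v) :
    ∃ p : ℕ → V, p 0 = u ∧ p (G.dist u v) = v ∧ p (G.dist u z) = z ∧
      ∀ i < G.dist u v, G.Adj (p i) (p (i + 1)) := by
  rw [mem_interval_iff] at hz
  obtain ⟨w1, hw1⟩ := (hc u z).exists_walk_length_eq_dist
  obtain ⟨w2, hw2⟩ := (hc z v).exists_walk_length_eq_dist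
  set k := G.dist u z with hk
  have hbd : w1.getVert k = z := by rw [← hw1]; exact w1.getVert_length
  refine ⟨fun i => if i < k then w1.getVert i else w2.getVert (i - k), ?_, ?_, ?_, ?_⟩
  · show (if 0 < k then w1.getVert 0 else w2.getVert (0 - k)) = u
    rcases Nat.eq_zero_or_pos k with h0 | hpos
    · have huz : u = z := hc.dist_eq_zero_iff.mp h0
      rw [if_neg (by omega : ¬ 0 < k), show 0 - k = 0 by omega, w2.getVert_zero]
      exact huz.symm
    · rw [if_pos hpos]
      exact w1.getVert_zero
  · show (if G.dist u v < k then w1.getVert (G.dist u v)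
        else w2.getVert (G.dist u v - k)) = v
    have hge : ¬ G.dist u v < k := by omega
    rw [if_neg hge]
    have he : G.dist u v - k = w2.length := by rw [hw2]; omega
    rw [he, w2.getVert_length]
  · show (if k < k then w1.getVert k else w2.getVert (k - k)) = z
    rw [if_neg (lt_irrefl k), Nat.sub_self, w2.getVert_zero]
  · intro i hi
    show G.Adj (if i < k then w1.getVert i else w2.getVert (i - k))
      (if i + 1 < k then w1.getVert (i + 1) else w2.getVert (i + 1 - k))
    by_cases h2 : i < k
    · rw [if_pos h2]
      by_cases h1 : i + 1 < k
      · rw [if_pos h1]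
        exact w1.adj_getVert_succ (by omega)
      · rw [if_neg h1]
        have hik : i + 1 = k := by omega
        have he : w2.getVert (i + 1 - k) = w1.getVert (i + 1) := by
          rw [hik, Nat.sub_self, w2.getVert_zero, hbd]
        rw [he]
        exact w1.adj_getVert_succ (by omega)
    · have h1 : ¬ i + 1 < k := by omega
      rw [if_neg h2, if_neg h1]
      have he : i + 1 - k = (i - k) + 1 := by omega
      rw [he]
      exact w2.adj_getVert_succ (by rw [hw2]; omega)

/-- Halfspaces of a median graph are convex. -/
lemma convex (hG : IsMedianGraph G) {a b : V} (hab : G.Adj a b) :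
    ∀ n : ℕ, ∀ u v : V, u ∈ Wset G a b → v ∈ Wset G a b → G.dist u v = n →
      ∀ z ∈ interval G u v, z ∈ Wset G a b := by
  have hc := hG.1
  intro n
  induction n using Nat.strong_induction_on with
  | _ n IH =>
    intro u v hu hv hn z hz
    rcases mem_W_or hG hab z with hzW | hzW
    · exact hzW
    exfalso
    have hzi := hz
    rw [mem_interval_iff] at hzi
    have hk1 : 1 ≤ G.dist u z := by
      rcases Nat.eq_zero_or_pos (G.dist u z) with h0 | h
      · exact absurd ((hc.dist_eq_zero_iff.mp h0) ▸ hu) (fun h' => not_mem_both h' hzW)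
      · exact h
    have hl1 : 1 ≤ G.dist z v := by
      rcases Nat.eq_zero_or_pos (G.dist z v) with h0 | h
      · have he : z = v := hc.dist_eq_zero_iff.mp h0
        exact absurd (he ▸ hv) (fun h' => not_mem_both h' hzW)
      · exact h
    have hn2 : 2 ≤ n := by omega
    obtain ⟨p, hp0, hpn, hpk, hpadj⟩ := exists_chain_through hc u v z hz
    rw [hn] at hpn hpadj
    -- inner induction: no geodesic chain from u to v with all interior vertices in
    -- W(b,a), by straightening at a peak of the distance to a
    have inner : ∀ s : ℕ, ∀ q : ℕ → V, q 0 = u → q n = v →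
        (∀ i < n, G.Adj (q i) (q (i + 1))) →
        (∀ i, 0 < i → i < n → q i ∈ Wset G b a) →
        (∑ i ∈ Finset.range (n + 1), G.dist a (q i)) = s → False := by
      intro s
      induction s using Nat.strong_induction_on with
      | _ s IHs =>
        intro q hq0 hqn hqadj hqint hqsum
        have hqu : q 0 ∈ Wset G a b := by rw [hq0]; exact hu
        have hqv : q n ∈ Wset G a b := by rw [hqn]; exact hv
        have hdq : G.dist (q 0) (q n) = n := by rw [hq0, hqn, hn]
        rcases Nat.lt_or_ge n 3 with h3 | h3
        · -- n = 2 : local convexity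
          have hn2' : n = 2 := by omega
          subst hn2'
          exact locConv hG hab hqu hqv (hqadj 0 (by omega)) (hqadj 1 (by omega))
            (hqint 1 (by omega) (by omega)) hdq
        · -- n ≥ 3
          obtain ⟨i0, hi0mem, hi0max⟩ := Finset.exists_max_image
            (Finset.range (n + 1)) (fun i => G.dist a (q i)) ⟨0, by simp⟩
          have hf1 : G.dist a (q 1) = G.dist a (q 0) + 1 :=
            (crossing hG hab (hqadj 0 (by omega)) hqu (hqint 1 (by omega) (by omega))).1
          have hfn : G.dist a (q (n - 1)) = G.dist a (q n) + 1 := by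
            have hadj' : G.Adj (q n) (q (n - 1)) := by
              have h' := hqadj (n - 1) (by omega)
              rw [show n - 1 + 1 = n by omega] at h'
              exact h'.symm
            exact (crossing hG hab hadj' hqv (hqint (n - 1) (by omega) (by omega))).1
          have hi0n : i0 ≤ n := by
            have := Finset.mem_range.mp hi0mem; omega
          have hi0pos : i0 ≠ 0 := by
            intro h0
            have := hi0max 1 (Finset.mem_range.mpr (by omega))
            rw [h0] at this
            omega
          have hi0top : i0 ≠ n := by
            intro h0
            have := hi0max (n - 1) (Finset.mem_range.mpr (by omega))
            rw [h0] at this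
            omega
          have hadjl : G.Adj (q (i0 - 1)) (q i0) := by
            have h' := hqadj (i0 - 1) (by omega)
            rwa [show i0 - 1 + 1 = i0 by omega] at h'
          have hadjr : G.Adj (q i0) (q (i0 + 1)) := hqadj i0 (by omega)
          have hfl : G.dist a (q (i0 - 1)) + 1 = G.dist a (q i0) := by
            have h := pm1' hG hadjl a
            have h2 := hi0max (i0 - 1) (Finset.mem_range.mpr (by omega))
            omega
          have hfr : G.dist a (q (i0 + 1)) + 1 = G.dist a (q i0) := by
            have h := pm1' hG hadjr a
            have h2 := hi0max (i0 + 1) (Finset.mem_range.mpr (by omega))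
            omega
          have hd2 : G.dist (q (i0 - 1)) (q (i0 + 1)) = 2 := by
            have h' := chain_dist_between hc q hqadj hdq
              (show i0 - 1 ≤ i0 + 1 by omega) (show i0 + 1 ≤ n by omega)
            rwa [show i0 + 1 - (i0 - 1) = 2 by omega] at h'
          have heqf : G.dist a (q (i0 - 1)) = G.dist a (q (i0 + 1)) := by omega
          obtain ⟨qq, hqql, hqqr, hqqd⟩ := qc hG hd2 heqf
          set q' : ℕ → V := fun i => if i = i0 then qq else q i with hq'
          have hq'0 : q' 0 = u := by
            simp only [hq', if_neg (show (0:ℕ) ≠ i0 by omega)]; exact hq0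
          have hq'n : q' n = v := by
            simp only [hq', if_neg (show n ≠ i0 by omega)]; exact hqn
          have hq'adj : ∀ i < n, G.Adj (q' i) (q' (i + 1)) := by
            intro i hi
            simp only [hq']
            by_cases he1 : i = i0
            · rw [if_pos he1, if_neg (by omega : ¬ i + 1 = i0), he1,
                show i0 + 1 = i0 + 1 from rfl]
              exact hqqr
            · rw [if_neg he1]
              by_cases he2 : i + 1 = i0
              · rw [if_pos he2, show i = i0 - 1 by omega]
                exact hqql
              · rw [if_neg he2]
                exact hqadj i hi
          have hdq' : G.dist (q' 0) (q' n) = n := by rw [hq'0, hq'n, hn]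
          rcases mem_W_or hG hab qq with hqqW | hqqW
          · -- qq ∈ W(a,b) : contradict the outer induction hypothesis
            by_cases hcase : i0 + 1 < n
            · have hdqv : G.dist qq v = n - i0 := by
                have h' := chain_dist_between hc q' hq'adj hdq'
                  (show i0 ≤ n by omega) (le_refl n)
                simp only [hq', if_pos rfl, if_neg (show n ≠ i0 by omega)] at h'
                rwa [hqn] at h'
              have hmem : q (i0 + 1) ∈ interval G qq v := by
                rw [mem_interval_iff]
                have e1 : G.dist qq (q (i0 + 1)) = 1 :=
                  SimpleGraph.dist_eq_one_iff_adj.mpr hqqr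
                have e2 : G.dist (q (i0 + 1)) v = n - (i0 + 1) := by
                  have h' := chain_dist_between hc q hqadj hdq
                    (show i0 + 1 ≤ n by omega) (le_refl n)
                  rwa [hqn] at h'
                rw [e1, e2, hdqv]
                omega
              have := IH (n - i0) (by omega) qq v hqqW hv hdqv (q (i0 + 1)) hmem
              exact not_mem_both this (hqint (i0 + 1) (by omega) hcase)
            · have hduq : G.dist u qq = i0 := by
                have h' := chain_dist_between hc q' hq'adj hdq'
                  (Nat.zero_le i0) (show i0 ≤ n by omega)
                simp only [hq', if_pos rfl, if_neg (show (0:ℕ) ≠ i0 by omega)] at h'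
                rw [hq0] at h'
                omega
              have hmem : q (i0 - 1) ∈ interval G u qq := by
                rw [mem_interval_iff]
                have e1 : G.dist (q (i0 - 1)) qq = 1 :=
                  SimpleGraph.dist_eq_one_iff_adj.mpr hqql
                have e2 : G.dist u (q (i0 - 1)) = i0 - 1 := by
                  have h' := chain_dist_between hc q hqadj hdq
                    (Nat.zero_le (i0 - 1)) (show i0 - 1 ≤ n by omega)
                  rw [hq0] at h'
                  omega
                rw [e1, e2, hduq]
                omega
              have := IH i0 (by omega) u qq hu hqqW hduq (q (i0 - 1)) hmem
              exact not_mem_both this (hqint (i0 - 1) (by omega) (by omega))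
          · -- qq ∈ W(b,a) : straightened chain has smaller weight; inner IH
            have hint' : ∀ i, 0 < i → i < n → q' i ∈ Wset G b a := by
              intro i hi0' hin
              simp only [hq']
              by_cases he : i = i0
              · rw [if_pos he]; exact hqqW
              · rw [if_neg he]; exact hqint i hi0' hin
            have hmemr : i0 ∈ Finset.range (n + 1) := Finset.mem_range.mpr (by omega)
            have e1 := Finset.sum_erase_add (Finset.range (n + 1))
              (fun i => G.dist a (q' i)) hmemr
            have e2 := Finset.sum_erase_add (Finset.range (n + 1))
              (fun i => G.dist a (q i)) hmemr
            have e3 : (∑ i ∈ (Finset.range (n + 1)).erase i0, G.dist a (q' i)) =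
                ∑ i ∈ (Finset.range (n + 1)).erase i0, G.dist a (q i) := by
              refine Finset.sum_congr rfl fun i hi => ?_
              have hne : i ≠ i0 := (Finset.mem_erase.mp hi).1
              simp only [hq', if_neg hne]
            have e4 : G.dist a (q' i0) = G.dist a qq := by
              simp only [hq', if_pos rfl]
            have e1' : (∑ i ∈ (Finset.range (n + 1)).erase i0, G.dist a (q' i))
                + G.dist a (q' i0) = ∑ i ∈ Finset.range (n + 1), G.dist a (q' i) := e1
            have e2' : (∑ i ∈ (Finset.range (n + 1)).erase i0, G.dist a (q i))
                + G.dist a (q i0) = ∑ i ∈ Finset.range (n + 1), G.dist a (q i) := e2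
            have hsum' : (∑ i ∈ Finset.range (n + 1), G.dist a (q' i)) + 2 = s := by
              rw [← hqsum, ← e1', ← e2', e3, e4]
              omega
            exact IHs (∑ i ∈ Finset.range (n + 1), G.dist a (q' i)) (by omega)
              q' hq'0 hq'n hq'adj hint' rfl
    -- either some interior vertex of the chain p is in W(a,b), or use the inner lemma
    by_cases hex : ∃ i, 0 < i ∧ i < n ∧ p i ∈ Wset G a b
    · obtain ⟨i, hi0, hin, hWi⟩ := hex
      have hdp : G.dist (p 0) (p n) = n := by rw [hp0, hpn, hn]
      have hkn : G.dist u z ≤ n := by omega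
      rcases Nat.lt_or_ge i (G.dist u z) with hlt | hge
      · have e1 : G.dist (p i) z = G.dist u z - i := by
          have h' := chain_dist_between hc p hpadj hdp (le_of_lt hlt) hkn
          rwa [hpk] at h'
        have e2 : G.dist (p i) v = n - i := by
          have h' := chain_dist_between hc p hpadj hdp (show i ≤ n by omega) (le_refl n)
          rwa [hpn] at h'
        have hmem : z ∈ interval G (p i) v := by
          rw [mem_interval_iff, e1, e2]
          omega
        exact not_mem_both (IH (n - i) (by omega) (p i) v hWi hv e2 z hmem) hzW
      · have hik : i ≠ G.dist u z := by
          intro h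
          rw [h, hpk] at hWi
          exact not_mem_both hWi hzW
        have hgt : G.dist u z < i := by omega
        have e1 : G.dist u (p i) = i := by
          have h' := chain_dist_between hc p hpadj hdp (Nat.zero_le i) (show i ≤ n by omega)
          rw [hp0] at h'
          omega
        have e2 : G.dist z (p i) = i - G.dist u z := by
          have h' := chain_dist_between hc p hpadj hdp (le_of_lt hgt) (show i ≤ n by omega)
          rwa [hpk] at h'
        have hmem : z ∈ interval G u (p i) := by
          rw [mem_interval_iff, e1, e2]
          omega
        exact not_mem_both (IH i (by omega) u (p i) hu hWi e1 z hmem) hzW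
    · push_neg at hex
      have hint : ∀ i, 0 < i → i < n → p i ∈ Wset G b a := by
        intro i hi0' hin
        rcases mem_W_or hG hab (p i) with h | h
        · exact absurd h (hex i hi0' hin)
        · exact h
      exact inner _ p hp0 hpn hpadj hint rfl

/-- Every vertex of a halfspace has a gate in the complementary halfspace. -/
lemma gate [Fintype V] (hG : IsMedianGraph G) {a b : V} (hab : G.Adj a b) (x : V)
    (hx : x ∈ Wset G a b) :
    ∃ g ∈ Wset G b a, 0 < G.dist x g ∧
      ∀ c ∈ Wset G b a, G.dist x g + G.dist g c = G.dist x c := by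
  classical
  have hc := hG.1
  have hbmem : b ∈ Wset G b a := by
    rw [mem_Wset_iff, SimpleGraph.dist_self, dcomm a b,
      SimpleGraph.dist_eq_one_iff_adj.mpr hab.symm]
    omega
  obtain ⟨g, hgmem, hgmin⟩ := Finset.exists_min_image
    (Finset.univ.filter (fun v => v ∈ Wset G b a)) (fun v => G.dist x v)
    ⟨b, Finset.mem_filter.mpr ⟨Finset.mem_univ b, hbmem⟩⟩
  have hg : g ∈ Wset G b a := (Finset.mem_filter.mp hgmem).2
  refine ⟨g, hg, ?_, ?_⟩
  · have hne : x ≠ g := fun h => not_mem_both hx (h ▸ hg)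
    exact hc.pos_dist_of_ne hne
  · intro c hcmem
    obtain ⟨m, ⟨m1, m2, m3⟩, -⟩ := hG.2 x c g
    rw [mem_interval_iff] at m1 m2 m3
    have hmW : m ∈ Wset G b a :=
      convex hG hab.symm (G.dist c g) c g hcmem hg rfl m m2
    have hmin : G.dist x g ≤ G.dist x m :=
      hgmin m (Finset.mem_filter.mpr ⟨Finset.mem_univ m, hmW⟩)
    have hmg : G.dist m g = 0 := by
      rw [dcomm g m, dcomm m x,
        dcomm g x] at m3
      omega
    have he : m = g := hc.dist_eq_zero_iff.mp hmg
    rw [he] at m1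
    omega

/-- Majority rule: if a median vertex lies in `W(a,b)`, then `W(a,b)` carries at least
as much weight as `W(b,a)`. -/
lemma majority [Fintype V] (hG : IsMedianGraph G) {a b : V} (hab : G.Adj a b)
    (w : V → ℝ) (hw : ∀ v, 0 ≤ w v) {x : V} (hxm : x ∈ medianSet G w)
    (hx : x ∈ Wset G a b) :
    (∑ v : V, if v ∈ Wset G b a then w v else 0) ≤
      ∑ v : V, if v ∈ Wset G a b then w v else 0 := by
  classical
  have hc := hG.1
  by_contra hlt
  push_neg at hlt
  obtain ⟨g, hg, hgpos, hgate⟩ := gate hG hab x hx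
  set k := G.dist x g with hk
  have key : (∑ v : V, w v * (G.dist g v : ℝ)) ≤
      (∑ v : V, w v * (G.dist x v : ℝ))
        + (k : ℝ) * (∑ v : V, if v ∈ Wset G a b then w v else 0)
        - (k : ℝ) * (∑ v : V, if v ∈ Wset G b a then w v else 0) := by
    have hpt : ∀ v : V, w v * (G.dist g v : ℝ) ≤
        w v * (G.dist x v : ℝ) + (k : ℝ) * (if v ∈ Wset G a b then w v else 0)
          - (k : ℝ) * (if v ∈ Wset G b a then w v else 0) := by
      intro v
      rcases mem_W_or hG hab v with hv | hv
      · rw [if_pos hv, if_neg (fun h => not_mem_both hv h)]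
        have htri : G.dist g v ≤ k + G.dist x v := by
          have h' := hc.dist_triangle (u := g) (v := x) (w := v)
          rw [dcomm g x] at h'
          omega
        have hcast : (G.dist g v : ℝ) ≤ (k : ℝ) + (G.dist x v : ℝ) := by
          exact_mod_cast htri
        nlinarith [hw v]
      · rw [if_pos hv, if_neg (fun h => not_mem_both h hv)]
        have hgv := hgate v hv
        have hcast : (G.dist x v : ℝ) = (k : ℝ) + (G.dist g v : ℝ) := by
          exact_mod_cast hgv.symm
        nlinarith [hw v]
    calc (∑ v : V, w v * (G.dist g v : ℝ))
        ≤ ∑ v : V, (w v * (G.dist x v : ℝ)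
            + (k : ℝ) * (if v ∈ Wset G a b then w v else 0)
            - (k : ℝ) * (if v ∈ Wset G b a then w v else 0)) :=
          Finset.sum_le_sum fun v _ => hpt v
      _ = _ := by
          rw [Finset.sum_sub_distrib, Finset.sum_add_distrib, ← Finset.mul_sum,
            ← Finset.mul_sum]
  have hmed : (∑ v : V, w v * (G.dist x v : ℝ)) ≤ ∑ v : V, w v * (G.dist g v : ℝ) := hxm g
  have hk1 : (1 : ℝ) ≤ (k : ℝ) := by exact_mod_cast hgpos
  nlinarith [key, hmed, hlt, hk1]

end MedianAux

/-- If two disjoint halfspaces both meet the median set, then every vertex outside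
their union has weight `0`. -/
theorem disjoint_halfspaces_meeting_median {V : Type*} [Fintype V] (G : SimpleGraph V)
    (hG : IsMedianGraph G) (w : V → ℝ) (hw : ∀ v, 0 ≤ w v)
    (a b c d : V) (hab : G.Adj a b) (hcd : G.Adj c d)
    (hdisj : Disjoint (Wset G a b) (Wset G c d))
    (h1 : (medianSet G w ∩ Wset G a b).Nonempty)
    (h2 : (medianSet G w ∩ Wset G c d).Nonempty) :
    ∀ v : V, v ∉ Wset G a b ∪ Wset G c d → w v = 0 := by
  classical
  obtain ⟨x, hxm, hxa⟩ := h1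
  obtain ⟨y, hym, hyc⟩ := h2
  have maj1 := MedianAux.majority hG hab w hw hxm hxa
  have maj2 := MedianAux.majority hG hcd w hw hym hyc
  have hdisj' : ∀ v : V, v ∈ Wset G a b → v ∉ Wset G c d := fun v hv hv' =>
    Set.disjoint_left.mp hdisj hv hv'
  have hBCM : (∑ v : V, if v ∈ Wset G b a then w v else 0) =
      (∑ v : V, if v ∈ Wset G c d then w v else 0)
        + ∑ v : V, if v ∈ Wset G b a ∧ v ∈ Wset G d c then w v else 0 := by
    rw [← Finset.sum_add_distrib]
    refine Finset.sum_congr rfl fun v _ => ?_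
    rcases MedianAux.mem_W_or hG hab v with hv | hv
    · rw [if_neg (fun h => MedianAux.not_mem_both hv h), if_neg (hdisj' v hv),
        if_neg (fun h => MedianAux.not_mem_both hv h.1)]
      ring
    · rw [if_pos hv]
      rcases MedianAux.mem_W_or hG hcd v with hv2 | hv2
      · rw [if_pos hv2, if_neg (fun h => MedianAux.not_mem_both hv2 h.2)]
        ring
      · rw [if_neg (fun h => MedianAux.not_mem_both h hv2), if_pos ⟨hv, hv2⟩]
        ring
  have hDAM : (∑ v : V, if v ∈ Wset G d c then w v else 0) =
      (∑ v : V, if v ∈ Wset G a b then w v else 0)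
        + ∑ v : V, if v ∈ Wset G b a ∧ v ∈ Wset G d c then w v else 0 := by
    rw [← Finset.sum_add_distrib]
    refine Finset.sum_congr rfl fun v _ => ?_
    rcases MedianAux.mem_W_or hG hcd v with hv | hv
    · rw [if_neg (fun h => MedianAux.not_mem_both hv h), if_neg (fun h => hdisj' v h hv),
        if_neg (fun h => MedianAux.not_mem_both hv h.2)]
      ring
    · rw [if_pos hv]
      rcases MedianAux.mem_W_or hG hab v with hv2 | hv2
      · rw [if_pos hv2, if_neg (fun h => MedianAux.not_mem_both hv2 h.1)]
        ring
      · rw [if_neg (fun h => MedianAux.not_mem_both h hv2), if_pos ⟨hv2, hv⟩]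
        ring
  have hM0 : (∑ v : V, if v ∈ Wset G b a ∧ v ∈ Wset G d c then w v else 0) ≤ 0 := by
    linarith [maj1, maj2, hBCM, hDAM]
  have hMnn : ∀ v ∈ (Finset.univ : Finset V),
      (0:ℝ) ≤ if v ∈ Wset G b a ∧ v ∈ Wset G d c then w v else 0 := by
    intro v _
    split
    · exact hw v
    · exact le_refl 0
  have hMeq : (∑ v : V, if v ∈ Wset G b a ∧ v ∈ Wset G d c then w v else 0) = 0 :=
    le_antisymm hM0 (Finset.sum_nonneg hMnn)
  intro v hv
  have hv1 : v ∈ Wset G b a :=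
    (MedianAux.mem_W_or hG hab v).resolve_left fun h => hv (Set.mem_union_left _ h)
  have hv2 : v ∈ Wset G d c :=
    (MedianAux.mem_W_or hG hcd v).resolve_left fun h => hv (Set.mem_union_right _ h)
  have := (Finset.sum_eq_zero_iff_of_nonneg hMnn).mp hMeq v (Finset.mem_univ v)
  rwa [if_pos ⟨hv1, hv2⟩] at this
end
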